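/- Let u, α, β : [0,∞) → ℝ be regulated functions with inf_{t≥0}(β(t) − α(t)) > 0, and let uₙ, αₙ, βₙ : [0,∞) → ℝ (n ∈ ℕ) be regulated functions with αₙ ≤ βₙ pointwise such that sup_{t≥0}|uₙ(t) − u(t)| + sup_{t≥0}|αₙ(t) − α(t)| + sup_{t≥0}|βₙ(t) − β(t)| → 0 as n → ∞. Then, for every T > 0, the functions t ↦ TV^{αₙ,βₙ}(uₙ,[0,t]) converge uniformly on [0,T] to t ↦ TV^{α,β}(u,[0,t]), and likewise t ↦ UTV^{αₙ,βₙ}(uₙ,[0,t]) converges uniformly to t ↦ UTV^{α,β}(u,[0,t]) and t ↦ DTV^{αₙ,βₙ}(uₙ,[0,t]) to t ↦ DTV^{α,β}(u,[0,t]). -/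

import Mathlib

open Filter Set Topology
open scoped ENNReal

/-- Sum of `f` over consecutive pairs of a finite sequence of points. -/
noncomputable def genVar (f : ℝ → ℝ → ℝ) (a b : ℝ) : ℝ≥0∞ :=
  ⨆ (n : ℕ) (t : ℕ → ℝ)
    (_ : (∀ i, i < n → t i < t (i + 1)) ∧ a ≤ t 0 ∧ t n ≤ b),
    ENNReal.ofReal (∑ i ∈ Finset.range n, f (t i) (t (i + 1)))

noncomputable def TV (ψ : ℝ → ℝ) : ℝ → ℝ → ℝ≥0∞ :=
  genVar (fun s t => |ψ t - ψ s|)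

noncomputable def UTV (ψ : ℝ → ℝ) : ℝ → ℝ → ℝ≥0∞ :=
  genVar (fun s t => max (ψ t - ψ s) 0)

noncomputable def DTV (ψ : ℝ → ℝ) : ℝ → ℝ → ℝ≥0∞ :=
  genVar (fun s t => max (ψ s - ψ t) 0)

noncomputable def TVc (ψ : ℝ → ℝ) (c : ℝ) : ℝ → ℝ → ℝ≥0∞ :=
  genVar (fun s t => max (|ψ t - ψ s| - c) 0)

noncomputable def UTVc (ψ : ℝ → ℝ) (c : ℝ) : ℝ → ℝ → ℝ≥0∞ :=
  genVar (fun s t => max (ψ t - ψ s - c) 0)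

noncomputable def DTVc (ψ : ℝ → ℝ) (c : ℝ) : ℝ → ℝ → ℝ≥0∞ :=
  genVar (fun s t => max (ψ s - ψ t - c) 0)

noncomputable def TVab (ψ α β : ℝ → ℝ) : ℝ → ℝ → ℝ≥0∞ :=
  genVar (fun s t =>
    max (|(ψ t - (α t + β t) / 2) - (ψ s - (α s + β s) / 2)|
          - ((β t - α t) + (β s - α s)) / 2) 0)

noncomputable def UTVab (ψ α β : ℝ → ℝ) : ℝ → ℝ → ℝ≥0∞ :=
  genVar (fun s t =>
    max ((ψ t - (α t + β t) / 2) - (ψ s - (α s + β s) / 2)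
          - ((β t - α t) + (β s - α s)) / 2) 0)

noncomputable def DTVab (ψ α β : ℝ → ℝ) : ℝ → ℝ → ℝ≥0∞ :=
  genVar (fun s t =>
    max ((ψ s - (α s + β s) / 2) - (ψ t - (α t + β t) / 2)
          - ((β t - α t) + (β s - α s)) / 2) 0)

/-- Regulated on `[a,∞)`: right limits everywhere, left limits at points `> a`. -/
def Regulated (a : ℝ) (ψ : ℝ → ℝ) : Prop :=
  (∀ x, a ≤ x → ∃ L, Tendsto ψ (𝓝[>] x) (𝓝 L)) ∧
  (∀ x, a < x → ∃ L, Tendsto ψ (𝓝[<] x) (𝓝 L))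

/-- Regulated on `[a,b]`. -/
def RegulatedOn (a b : ℝ) (ψ : ℝ → ℝ) : Prop :=
  (∀ x, a ≤ x → x < b → ∃ L, Tendsto ψ (𝓝[>] x) (𝓝 L)) ∧
  (∀ x, a < x → x ≤ b → ∃ L, Tendsto ψ (𝓝[<] x) (𝓝 L))

lemma chain_mono {t : ℕ → ℝ} {n : ℕ} (h : ∀ i, i < n → t i < t (i + 1)) :
    ∀ i j, i ≤ j → j ≤ n → t i ≤ t j := by
  intro i j hij hjn
  induction j with
  | zero => simp_all
  | succ k ih =>
    rcases Nat.lt_or_ge i (k+1) with hk | hk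
    · exact le_trans (ih (Nat.lt_succ_iff.mp hk) (le_trans (Nat.le_succ k) hjn))
        (h k (Nat.lt_of_lt_of_le (Nat.lt_succ_self k) hjn)).le
    · have : i = k + 1 := le_antisymm hij hk
      simp [this]

lemma chain_smono {t : ℕ → ℝ} {n : ℕ} (h : ∀ i, i < n → t i < t (i + 1)) :
    ∀ i j, i < j → j ≤ n → t i < t j := by
  intro i j hij hjn
  have h1 : t i < t (i+1) := h i (lt_of_lt_of_le hij hjn)
  exact lt_of_lt_of_le h1 (chain_mono h (i+1) j hij hjn)

lemma two_elem (s : Finset ℕ) (h : ∀ i ∈ s, ∀ j ∈ s, i < j → j = i + 1) :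
    s.card ≤ 2 := by
  rcases s.eq_empty_or_nonempty with rfl | hne
  · simp
  · have hsub : s ⊆ {s.min' hne, s.min' hne + 1} := by
      intro i hi
      rcases eq_or_lt_of_le (s.min'_le i hi) with he | hlt
      · simp [← he]
      · have := h _ (s.min'_mem hne) i hi hlt
        simp [this]
    exact (Finset.card_le_card hsub).trans ((Finset.card_insert_le _ _).trans (by simp))

lemma genVar_zero (a b : ℝ) : genVar (fun _ _ => 0) a b = 0 := by
  unfold genVar
  refine le_antisymm ?_ zero_le
  exact iSup_le fun n => iSup_le fun t => iSup_le fun _ => by simp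

lemma comp_lemma (f g : ℝ → ℝ → ℝ) (T' T δ : ℝ) (hδ : 0 ≤ δ) (F : Finset ℝ)
    (hTT : T' ≤ T)
    (hf0 : ∀ s t, 0 ≤ f s t)
    (hg0 : ∀ s t, 0 ≤ g s t)
    (hb : ∀ s t, 0 ≤ s → s < t → t ≤ T → g s t ≤ f s t + δ)
    (htr : ∀ s t, 0 ≤ s → s < t → t ≤ T → 0 < g s t → ∃ p ∈ F, s ≤ p ∧ p ≤ t) :
    genVar g 0 T' ≤ genVar f 0 T' + ENNReal.ofReal (δ * (2 * F.card)) := by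
  unfold genVar
  refine iSup_le fun n => iSup_le fun t => iSup_le fun hh => ?_
  obtain ⟨hinc, h0, hn⟩ := hh
  have hpos : ∀ i, i ≤ n → 0 ≤ t i := fun i hi => le_trans h0 (chain_mono hinc 0 i (Nat.zero_le _) hi)
  have hle : ∀ i, i ≤ n → t i ≤ T := fun i hi =>
    le_trans (le_trans (chain_mono hinc i n hi le_rfl) hn) hTT
  classical
  set big : Finset ℕ := (Finset.range n).filter (fun i => 0 < g (t i) (t (i+1))) with hbig
  -- choice of straddled point
  set p : ℕ → ℝ := fun i => if h : ∃ q ∈ F, t i ≤ q ∧ q ≤ t (i+1) then h.choose else 0 with hp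
  have hpmem : ∀ i ∈ big, p i ∈ F ∧ t i ≤ p i ∧ p i ≤ t (i+1) := by
    intro i hi
    simp only [hbig, Finset.mem_filter, Finset.mem_range] at hi
    have hex := htr (t i) (t (i+1)) (hpos i hi.1.le) (hinc i hi.1) (hle (i+1) hi.1) hi.2
    rw [hp]; simp only [dif_pos hex]
    obtain ⟨h1, h2⟩ := hex.choose_spec
    exact ⟨h1, h2⟩
  have hcard : big.card ≤ 2 * F.card := by
    have h1 : big.card ≤ 2 * (big.image p).card := by
      apply Finset.card_le_mul_card_image
      intro a ha
      apply two_elem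
      intro i hi j hj hij
      simp only [Finset.mem_filter] at hi hj
      obtain ⟨hi1, hi2⟩ := hi
      obtain ⟨hj1, hj2⟩ := hj
      have hib := hpmem i hi1
      have hjb := hpmem j hj1
      simp only [hbig, Finset.mem_filter, Finset.mem_range] at hi1 hj1
      by_contra hne
      have hlt : i + 1 < j := lt_of_le_of_ne hij (fun h => hne h.symm)
      have : t (i+1) < t j := chain_smono hinc (i+1) j hlt hj1.1.le
      rw [hi2, hj2] at *
      linarith [hib.2.2, hjb.2.1]
    have h2 : (big.image p) ⊆ F := by
      intro a ha
      obtain ⟨i, hi, rfl⟩ := Finset.mem_image.mp ha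
      exact (hpmem i hi).1
    calc big.card ≤ 2 * (big.image p).card := h1
      _ ≤ 2 * F.card := by
          exact Nat.mul_le_mul_left 2 (Finset.card_le_card h2)
  -- sum estimate
  have hsum : ∑ i ∈ Finset.range n, g (t i) (t (i+1)) ≤
      (∑ i ∈ Finset.range n, f (t i) (t (i+1))) + δ * (2 * F.card) := by
    have e1 : ∑ i ∈ Finset.range n, g (t i) (t (i+1)) = ∑ i ∈ big, g (t i) (t (i+1)) := by
      rw [hbig]
      refine (Finset.sum_filter_of_ne ?_).symm
      intro i _ hgi
      exact lt_of_le_of_ne (hg0 _ _) (Ne.symm hgi)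
    have e2 : ∑ i ∈ big, g (t i) (t (i+1)) ≤ ∑ i ∈ big, (f (t i) (t (i+1)) + δ) := by
      refine Finset.sum_le_sum fun i hi => ?_
      simp only [hbig, Finset.mem_filter, Finset.mem_range] at hi
      exact hb _ _ (hpos i hi.1.le) (hinc i hi.1) (hle (i+1) hi.1)
    have e3 : ∑ i ∈ big, (f (t i) (t (i+1)) + δ) =
        (∑ i ∈ big, f (t i) (t (i+1))) + δ * big.card := by
      rw [Finset.sum_add_distrib, Finset.sum_const, nsmul_eq_mul, mul_comm]
    have e4 : ∑ i ∈ big, f (t i) (t (i+1)) ≤ ∑ i ∈ Finset.range n, f (t i) (t (i+1)) :=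
      Finset.sum_le_sum_of_subset_of_nonneg (Finset.filter_subset _ _) (fun i _ _ => hf0 _ _)
    have e5 : δ * big.card ≤ δ * (2 * F.card) := by
      apply mul_le_mul_of_nonneg_left _ hδ
      exact_mod_cast hcard
    calc ∑ i ∈ Finset.range n, g (t i) (t (i+1)) = ∑ i ∈ big, g (t i) (t (i+1)) := e1
      _ ≤ (∑ i ∈ big, f (t i) (t (i+1))) + δ * big.card := by rw [← e3] at *; exact e2
      _ ≤ (∑ i ∈ Finset.range n, f (t i) (t (i+1))) + δ * (2 * F.card) := add_le_add e4 e5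
  calc ENNReal.ofReal (∑ i ∈ Finset.range n, g (t i) (t (i+1)))
      ≤ ENNReal.ofReal ((∑ i ∈ Finset.range n, f (t i) (t (i+1))) + δ * (2 * F.card)) :=
        ENNReal.ofReal_le_ofReal hsum
    _ ≤ ENNReal.ofReal (∑ i ∈ Finset.range n, f (t i) (t (i+1))) + ENNReal.ofReal (δ * (2 * F.card)) :=
        ENNReal.ofReal_add_le
    _ ≤ (⨆ (n' : ℕ) (t' : ℕ → ℝ)
          (_ : (∀ i, i < n' → t' i < t' (i + 1)) ∧ 0 ≤ t' 0 ∧ t' n' ≤ T'),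
          ENNReal.ofReal (∑ i ∈ Finset.range n', f (t' i) (t' (i + 1)))) + ENNReal.ofReal (δ * (2 * F.card)) := by
        gcongr
        exact le_iSup_of_le n (le_iSup_of_le t (le_iSup_of_le ⟨hinc, h0, hn⟩ le_rfl))

lemma local_osc (ψ : ℝ → ℝ) (hψ : Regulated 0 ψ) (c : ℝ) (hc : 0 < c)
    (T : ℝ) :
    ∀ x ∈ Icc (0:ℝ) T, ∃ η > 0, ∃ B : ℝ,
      (∀ p q, p ∈ Ioo (x-η) x → q ∈ Ioo (x-η) x → 0 ≤ p → 0 ≤ q → |ψ p - ψ q| ≤ c) ∧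
      (∀ p q, p ∈ Ioo x (x+η) → q ∈ Ioo x (x+η) → |ψ p - ψ q| ≤ c) ∧
      (∀ p, p ∈ Ioo (x-η) (x+η) → 0 ≤ p → |ψ p| ≤ B) := by
  intro x hx
  obtain ⟨L, hL⟩ := hψ.1 x hx.1
  have hev : ∀ᶠ z in 𝓝[>] x, ψ z ∈ Metric.closedBall L (c/2) :=
    hL (Metric.closedBall_mem_nhds L (by positivity))
  obtain ⟨u, hu, huS⟩ := mem_nhdsGT_iff_exists_Ioo_subset.mp hev
  have hu' : x < u := mem_Ioi.mp hu
  rcases eq_or_lt_of_le hx.1 with h0 | h0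
  · -- x = 0
    refine ⟨min 1 (u - x), lt_min one_pos (by linarith), |ψ x| + (|L| + c), ?_, ?_, ?_⟩
    · intro p q hp _ hp0 _
      exfalso
      have := hp.2
      rw [← h0] at this
      linarith
    · intro p q hp hq
      have hpu : p ∈ Ioo x u := ⟨hp.1, lt_of_lt_of_le hp.2 (by linarith [min_le_right 1 (u-x)])⟩
      have hqu : q ∈ Ioo x u := ⟨hq.1, lt_of_lt_of_le hq.2 (by linarith [min_le_right 1 (u-x)])⟩
      have h1 := Metric.mem_closedBall.mp (huS hpu)
      have h2 := Metric.mem_closedBall.mp (huS hqu)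
      rw [Real.dist_eq] at h1 h2
      calc |ψ p - ψ q| ≤ |ψ p - L| + |L - ψ q| := abs_sub_le _ _ _
        _ ≤ c/2 + c/2 := by rw [abs_sub_comm L (ψ q)]; exact add_le_add h1 h2
        _ = c := by ring
    · intro p hp hp0
      rcases lt_trichotomy p x with h | h | h
      · exfalso; rw [← h0] at h; linarith
      · rw [h]; linarith [abs_nonneg L, hc.le]
      · have hpu : p ∈ Ioo x u := ⟨h, lt_of_lt_of_le hp.2 (by linarith [min_le_right 1 (u-x)])⟩
        have h1 := Metric.mem_closedBall.mp (huS hpu)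
        rw [Real.dist_eq] at h1
        have h2 := abs_sub_abs_le_abs_sub (ψ p) L
        have : 0 ≤ |ψ x| := abs_nonneg _
        linarith
  · -- x > 0
    obtain ⟨M, hM⟩ := hψ.2 x h0
    have hev' : ∀ᶠ z in 𝓝[<] x, ψ z ∈ Metric.closedBall M (c/2) :=
      hM (Metric.closedBall_mem_nhds M (by positivity))
    obtain ⟨l, hl, hlS⟩ := mem_nhdsLT_iff_exists_Ioo_subset.mp hev'
    have hl' : l < x := mem_Iio.mp hl
    refine ⟨min (x - l) (u - x), lt_min (by linarith) (by linarith),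
      |ψ x| + (|L| + |M| + c), ?_, ?_, ?_⟩
    · intro p q hp hq _ _
      have hpl : p ∈ Ioo l x := ⟨by linarith [hp.1, min_le_left (x-l) (u-x)], hp.2⟩
      have hql : q ∈ Ioo l x := ⟨by linarith [hq.1, min_le_left (x-l) (u-x)], hq.2⟩
      have h1 := Metric.mem_closedBall.mp (hlS hpl)
      have h2 := Metric.mem_closedBall.mp (hlS hql)
      rw [Real.dist_eq] at h1 h2
      calc |ψ p - ψ q| ≤ |ψ p - M| + |M - ψ q| := abs_sub_le _ _ _
        _ ≤ c/2 + c/2 := by rw [abs_sub_comm M (ψ q)]; exact add_le_add h1 h2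
        _ = c := by ring
    · intro p q hp hq
      have hpu : p ∈ Ioo x u := ⟨hp.1, by linarith [hp.2, min_le_right (x-l) (u-x)]⟩
      have hqu : q ∈ Ioo x u := ⟨hq.1, by linarith [hq.2, min_le_right (x-l) (u-x)]⟩
      have h1 := Metric.mem_closedBall.mp (huS hpu)
      have h2 := Metric.mem_closedBall.mp (huS hqu)
      rw [Real.dist_eq] at h1 h2
      calc |ψ p - ψ q| ≤ |ψ p - L| + |L - ψ q| := abs_sub_le _ _ _
        _ ≤ c/2 + c/2 := by rw [abs_sub_comm L (ψ q)]; exact add_le_add h1 h2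
        _ = c := by ring
    · intro p hp _
      have hax := abs_nonneg (ψ x)
      have haL := abs_nonneg L
      have haM := abs_nonneg M
      rcases lt_trichotomy p x with h | h | h
      · have hpl : p ∈ Ioo l x := ⟨by linarith [hp.1, min_le_left (x-l) (u-x)], h⟩
        have h1 := Metric.mem_closedBall.mp (hlS hpl)
        rw [Real.dist_eq] at h1
        have h2 := abs_sub_abs_le_abs_sub (ψ p) M
        linarith
      · rw [h]; linarith
      · have hpu : p ∈ Ioo x u := ⟨h, by linarith [hp.2, min_le_right (x-l) (u-x)]⟩
        have h1 := Metric.mem_closedBall.mp (huS hpu)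
        rw [Real.dist_eq] at h1
        have h2 := abs_sub_abs_le_abs_sub (ψ p) L
        linarith

lemma lemPB (ψ : ℝ → ℝ) (hψ : Regulated 0 ψ) (T c : ℝ) (hc : 0 < c) :
    ∃ F : Finset ℝ, ∃ B : ℝ,
      (∀ x y, 0 ≤ x → x ≤ y → y ≤ T → (∀ p ∈ F, p < x ∨ y < p) → |ψ y - ψ x| ≤ c) ∧
      (∀ x, x ∈ Icc (0:ℝ) T → |ψ x| ≤ B) := by
  classical
  rcases le_or_gt T 0 with hT | hT
  · refine ⟨∅, |ψ 0|, ?_, ?_⟩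
    · intro x y hx hxy hyT _
      have hx0 : x = 0 := le_antisymm (by linarith) hx
      have hy0 : y = 0 := le_antisymm (by linarith) (by linarith)
      simp [hx0, hy0, hc.le]
    · intro x hx
      have : x = 0 := le_antisymm (le_trans hx.2 hT) hx.1
      simp [this]
  have hloc := local_osc ψ hψ c hc T
  choose! η hη Bf hL hR hBd using hloc
  have hcov : Icc (0:ℝ) T ⊆ ⋃ z : ↥(Icc (0:ℝ) T), Ioo ((z:ℝ) - η z) ((z:ℝ) + η z) := by
    intro x hx
    have := hη x hx
    exact mem_iUnion.mpr ⟨⟨x, hx⟩, by constructor <;> (simp only []; linarith)⟩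
  obtain ⟨G, hG⟩ := isCompact_Icc.elim_finite_subcover
    (fun z : ↥(Icc (0:ℝ) T) => Ioo ((z:ℝ) - η z) ((z:ℝ) + η z)) (fun z => isOpen_Ioo) hcov
  refine ⟨(G.image (fun z : ↥(Icc (0:ℝ) T) => (z:ℝ))) ∪ (G.image (fun z : ↥(Icc (0:ℝ) T) => (z:ℝ) - η z)) ∪ (G.image (fun z : ↥(Icc (0:ℝ) T) => (z:ℝ) + η z)),
    ∑ z ∈ G, |Bf z|, ?_, ?_⟩
  · intro x y hx hxy hyT hF
    rcases eq_or_lt_of_le hxy with rfl | hxy'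
    · simp [hc.le]
    have hxm : x ∈ Icc (0:ℝ) T := ⟨hx, le_trans hxy hyT⟩
    have hmem := hG hxm
    simp only [mem_iUnion] at hmem
    obtain ⟨z, hzG, hxz⟩ := hmem
    have hzF : (z:ℝ) ∈ (G.image (fun z : ↥(Icc (0:ℝ) T) => (z:ℝ))) ∪ (G.image (fun z : ↥(Icc (0:ℝ) T) => (z:ℝ) - η z)) ∪ (G.image (fun z : ↥(Icc (0:ℝ) T) => (z:ℝ) + η z)) := by
      simp only [Finset.mem_union, Finset.mem_image]
      exact Or.inl (Or.inl ⟨z, hzG, rfl⟩)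
    have hzpF : (z:ℝ) + η z ∈ (G.image (fun z : ↥(Icc (0:ℝ) T) => (z:ℝ))) ∪ (G.image (fun z : ↥(Icc (0:ℝ) T) => (z:ℝ) - η z)) ∪ (G.image (fun z : ↥(Icc (0:ℝ) T) => (z:ℝ) + η z)) := by
      simp only [Finset.mem_union, Finset.mem_image]
      exact Or.inr ⟨z, hzG, rfl⟩
    rcases lt_trichotomy x (z:ℝ) with h | h | h
    · have hyz : y < (z:ℝ) := by
        rcases hF _ hzF with h' | h'
        · linarith
        · exact h'
      have hxI : x ∈ Ioo ((z:ℝ) - η z) (z:ℝ) := ⟨hxz.1, h⟩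
      have hyI : y ∈ Ioo ((z:ℝ) - η z) (z:ℝ) := ⟨by linarith [hxz.1], hyz⟩
      exact hL z z.2 y x hyI hxI (by linarith) hx
    · exfalso
      rcases hF _ hzF with h' | h' <;> linarith
    · have hyz : y < (z:ℝ) + η z := by
        rcases hF _ hzpF with h' | h'
        · linarith [hxz.2]
        · exact h'
      have hxI : x ∈ Ioo (z:ℝ) ((z:ℝ) + η z) := ⟨h, hxz.2⟩
      have hyI : y ∈ Ioo (z:ℝ) ((z:ℝ) + η z) := ⟨by linarith, hyz⟩
      exact hR z z.2 y x hyI hxI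
  · intro x hx
    have hmem := hG hx
    simp only [mem_iUnion] at hmem
    obtain ⟨z, hzG, hxz⟩ := hmem
    calc |ψ x| ≤ Bf z := hBd z z.2 x hxz hx.1
      _ ≤ |Bf z| := le_abs_self _
      _ ≤ ∑ z ∈ G, |Bf z| := Finset.single_le_sum (f := fun z : ↥(Icc (0:ℝ) T) => |Bf (z:ℝ)|) (fun i _ => abs_nonneg _) hzG

lemma toReal_dist (a b : ℝ≥0∞) (d : ℝ) (ha : a ≠ ⊤) (hb : b ≠ ⊤)
    (h1 : a ≤ b + ENNReal.ofReal d) (h2 : b ≤ a + ENNReal.ofReal d) (hd : 0 ≤ d) :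
    |a.toReal - b.toReal| ≤ d := by
  rw [abs_sub_le_iff]
  constructor
  · have := ENNReal.toReal_mono (by finiteness) h1
    rw [ENNReal.toReal_add hb ENNReal.ofReal_ne_top, ENNReal.toReal_ofReal hd] at this
    linarith
  · have := ENNReal.toReal_mono (by finiteness) h2
    rw [ENNReal.toReal_add ha ENNReal.ofReal_ne_top, ENNReal.toReal_ofReal hd] at this
    linarith

lemma key (Φ : ℝ → ℝ) (hΦL : ∀ x y, |Φ x - Φ y| ≤ |x - y|) (hΦabs : ∀ x, |Φ x| ≤ |x|)
    (ψ γ : ℝ → ℝ) (hψ : Regulated 0 ψ) (γ₀ : ℝ) (hγ₀ : 0 < γ₀)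
    (hgap : ∀ t, 0 ≤ t → γ₀ ≤ γ t)
    (ψn γn : ℕ → ℝ → ℝ)
    (hconv' : ∀ ε : ℝ, 0 < ε → ∃ n₀ : ℕ, ∀ n ≥ n₀, ∀ x, 0 ≤ x →
        |ψn n x - ψ x| ≤ ε ∧ |γn n x - γ x| ≤ ε)
    (T : ℝ) (hT : 0 < T) :
    TendstoUniformlyOn
      (fun n t' => (genVar (fun s t => max (Φ (ψn n t - ψn n s) - (γn n t + γn n s)/2) 0) 0 t').toReal)
      (fun t' => (genVar (fun s t => max (Φ (ψ t - ψ s) - (γ t + γ s)/2) 0) 0 t').toReal)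
      atTop (Icc 0 T) := by
  obtain ⟨F, B, hF, hB⟩ := lemPB ψ hψ T (γ₀/2) (by positivity)
  have hB0 : 0 ≤ B := le_trans (abs_nonneg _) (hB 0 ⟨le_rfl, hT.le⟩)
  set N : ℝ := 2 * F.card with hN
  have hN0 : 0 ≤ N := by positivity
  set f : ℝ → ℝ → ℝ := fun s t => max (Φ (ψ t - ψ s) - (γ t + γ s)/2) 0 with hf
  have hf0 : ∀ s t, 0 ≤ f s t := fun s t => le_max_right _ _
  have htrF : ∀ s t, 0 ≤ s → s < t → t ≤ T → γ₀/2 < |ψ t - ψ s| → ∃ p ∈ F, s ≤ p ∧ p ≤ t := by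
    intro s t hs hst hT' hbig
    by_contra hcon
    push_neg at hcon
    have hor : ∀ p ∈ F, p < s ∨ t < p := by
      intro p hp
      rcases lt_or_ge p s with h | h
      · exact Or.inl h
      · exact Or.inr (lt_of_not_ge fun h2 => absurd (hcon p hp h) (not_lt.mpr h2))
    have := hF s t hs hst.le hT' hor
    linarith
  have htrf : ∀ s t, 0 ≤ s → s < t → t ≤ T → 0 < f s t → ∃ p ∈ F, s ≤ p ∧ p ≤ t := by
    intro s t hs hst hT' hpos
    have h1 : 0 < Φ (ψ t - ψ s) - (γ t + γ s)/2 := by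
      by_contra h
      push_neg at h
      have hz : max (Φ (ψ t - ψ s) - (γ t + γ s)/2) 0 = 0 := max_eq_right h
      simp only [hf] at hpos
      rw [hz] at hpos
      exact lt_irrefl 0 hpos
    have h2 : γ₀ ≤ (γ t + γ s)/2 := by
      have := hgap t (by linarith)
      have := hgap s hs
      linarith
    have h3 : Φ (ψ t - ψ s) ≤ |ψ t - ψ s| := le_trans (le_abs_self _) (hΦabs _)
    exact htrF s t hs hst hT' (by linarith)
  have hfin : ∀ t' : ℝ, t' ≤ T → genVar f 0 t' ≤ ENNReal.ofReal (2*B * (2*F.card)) := by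
    intro t' hTT
    have := comp_lemma (fun _ _ => 0) f t' T (2*B) (by positivity) F hTT
      (fun _ _ => le_rfl) hf0
      (fun s t hs hst ht => by
        have h3 : Φ (ψ t - ψ s) ≤ |ψ t - ψ s| := le_trans (le_abs_self _) (hΦabs _)
        have h4 : |ψ t - ψ s| ≤ |ψ t| + |ψ s| := abs_sub _ _
        have h5 : |ψ t| ≤ B := hB t ⟨by linarith, ht⟩
        have h6 : |ψ s| ≤ B := hB s ⟨hs, by linarith⟩
        have h2 : γ₀ ≤ (γ t + γ s)/2 := by
          have := hgap t (by linarith); have := hgap s hs; linarith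
        simp only [hf]
        rw [max_le_iff]
        constructor <;> [linarith; positivity])
      htrf
    rwa [genVar_zero, zero_add] at this
  rw [Metric.tendstoUniformlyOn_iff]
  intro ε hε
  set ε' : ℝ := min (γ₀/12) (ε/(6*(N+1))) with hε'def
  have hε' : 0 < ε' := lt_min (by positivity) (by positivity)
  obtain ⟨n₀, hn₀⟩ := hconv' ε' hε'
  filter_upwards [eventually_ge_atTop n₀] with n hn
  intro t' ht'
  simp only [Real.dist_eq]
  set g : ℝ → ℝ → ℝ := fun s t => max (Φ (ψn n t - ψn n s) - (γn n t + γn n s)/2) 0 with hg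
  have hg0 : ∀ s t, 0 ≤ g s t := fun s t => le_max_right _ _
  have hd := hn₀ n hn
  have hεγ : ε' ≤ γ₀/12 := min_le_left _ _
  have hεN : ε' ≤ ε/(6*(N+1)) := min_le_right _ _
  have hbound : ∀ s t, 0 ≤ s → s < t → t ≤ T →
      |(Φ (ψn n t - ψn n s) - (γn n t + γn n s)/2) - (Φ (ψ t - ψ s) - (γ t + γ s)/2)| ≤ 3*ε' := by
    intro s t hs hst ht
    have hds := hd s hs
    have hdt := hd t (by linarith)
    have h1 : |Φ (ψn n t - ψn n s) - Φ (ψ t - ψ s)| ≤ |(ψn n t - ψn n s) - (ψ t - ψ s)| := hΦL _ _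
    have h2 : |(ψn n t - ψn n s) - (ψ t - ψ s)| ≤ |ψn n t - ψ t| + |ψn n s - ψ s| := by
      calc |(ψn n t - ψn n s) - (ψ t - ψ s)| = |(ψn n t - ψ t) - (ψn n s - ψ s)| := by ring_nf
        _ ≤ |ψn n t - ψ t| + |ψn n s - ψ s| := abs_sub _ _
    have h3 : |(γn n t + γn n s)/2 - (γ t + γ s)/2| ≤ ε' := by
      have e : (γn n t + γn n s)/2 - (γ t + γ s)/2 = ((γn n t - γ t) + (γn n s - γ s))/2 := by ring
      rw [e, abs_div, abs_two]
      have := abs_add_le (γn n t - γ t) (γn n s - γ s)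
      linarith [hds.2, hdt.2]
    have e2 : (Φ (ψn n t - ψn n s) - (γn n t + γn n s)/2) - (Φ (ψ t - ψ s) - (γ t + γ s)/2)
        = (Φ (ψn n t - ψn n s) - Φ (ψ t - ψ s)) - ((γn n t + γn n s)/2 - (γ t + γ s)/2) := by ring
    rw [e2]
    exact le_trans (abs_sub _ _) (by linarith [hds.1, hdt.1])
  have htrg : ∀ s t, 0 ≤ s → s < t → t ≤ T → 0 < g s t → ∃ p ∈ F, s ≤ p ∧ p ≤ t := by
    intro s t hs hst ht hpos
    have h1 : 0 < Φ (ψn n t - ψn n s) - (γn n t + γn n s)/2 := by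
      by_contra h
      push_neg at h
      have hz : max (Φ (ψn n t - ψn n s) - (γn n t + γn n s)/2) 0 = 0 := max_eq_right h
      simp only [hg] at hpos
      rw [hz] at hpos
      exact lt_irrefl 0 hpos
    have hds := hd s hs
    have hdt := hd t (by linarith)
    have hγs := abs_le.mp hds.2
    have hγt := abs_le.mp hdt.2
    have hgs := hgap s hs
    have hgt := hgap t (by linarith)
    have hΦn : Φ (ψn n t - ψn n s) ≤ |ψn n t - ψn n s| := le_trans (le_abs_self _) (hΦabs _)
    have h2 : |(ψn n t - ψn n s) - (ψ t - ψ s)| ≤ |ψn n t - ψ t| + |ψn n s - ψ s| := by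
      calc |(ψn n t - ψn n s) - (ψ t - ψ s)| = |(ψn n t - ψ t) - (ψn n s - ψ s)| := by ring_nf
        _ ≤ |ψn n t - ψ t| + |ψn n s - ψ s| := abs_sub _ _
    have h4 : |ψn n t - ψn n s| ≤ |ψ t - ψ s| + 2*ε' := by
      have := abs_sub_abs_le_abs_sub (ψn n t - ψn n s) (ψ t - ψ s)
      linarith [hds.1, hdt.1]
    apply htrF s t hs hst ht
    linarith
  have comp1 : genVar g 0 t' ≤ genVar f 0 t' + ENNReal.ofReal ((3*ε') * (2*F.card)) :=
    comp_lemma f g t' T (3*ε') (by positivity) F ht'.2 hf0 hg0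
      (fun s t hs hst ht => by
        have h := abs_le.mp (hbound s t hs hst ht)
        simp only [hg, hf]
        apply max_le
        · linarith [le_max_left (Φ (ψ t - ψ s) - (γ t + γ s)/2) (0:ℝ), h.2]
        · linarith [le_max_right (Φ (ψ t - ψ s) - (γ t + γ s)/2) (0:ℝ)])
      htrg
  have comp2 : genVar f 0 t' ≤ genVar g 0 t' + ENNReal.ofReal ((3*ε') * (2*F.card)) :=
    comp_lemma g f t' T (3*ε') (by positivity) F ht'.2 hg0 hf0
      (fun s t hs hst ht => by
        have h := abs_le.mp (hbound s t hs hst ht)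
        simp only [hg, hf]
        apply max_le
        · linarith [le_max_left (Φ (ψn n t - ψn n s) - (γn n t + γn n s)/2) (0:ℝ), h.1]
        · linarith [le_max_right (Φ (ψn n t - ψn n s) - (γn n t + γn n s)/2) (0:ℝ)])
      htrf
  have hfne : genVar f 0 t' ≠ ⊤ :=
    ne_top_of_le_ne_top ENNReal.ofReal_ne_top (hfin t' ht'.2)
  have hgne : genVar g 0 t' ≠ ⊤ :=
    ne_top_of_le_ne_top (ENNReal.add_ne_top.mpr ⟨hfne, ENNReal.ofReal_ne_top⟩) comp1
  have habs := toReal_dist _ _ _ hfne hgne comp2 comp1 (by positivity)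
  refine lt_of_le_of_lt habs ?_
  have hNc : (2*(F.card:ℝ)) = N := hN.symm
  have hfinal : (3*ε') * (2*(F.card:ℝ)) < ε := by
    rw [hNc]
    have h6 : 6*(N+1) > 0 := by positivity
    have hεN' : ε' * (6*(N+1)) ≤ ε := by
      have := mul_le_mul_of_nonneg_right hεN (le_of_lt h6)
      rwa [div_mul_cancel₀] at this
      positivity
    nlinarith [hε', hN0, hε]
  exact hfinal

/-- stability of the α,β-truncated variations under uniform
convergence of inputs and boundaries, when the limit boundaries have a gap
bounded away from zero: the truncated variation functions converge
uniformly on compact intervals. -/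
theorem stmt19 (u α β : ℝ → ℝ)
    (hu : Regulated 0 u) (hα : Regulated 0 α) (hβ : Regulated 0 β)
    (γ₀ : ℝ) (hγ₀ : 0 < γ₀) (hgap : ∀ t, 0 ≤ t → γ₀ ≤ β t - α t)
    (un αn βn : ℕ → ℝ → ℝ)
    (hregn : ∀ n, Regulated 0 (un n) ∧ Regulated 0 (αn n) ∧ Regulated 0 (βn n))
    (hαβn : ∀ n, ∀ t, 0 ≤ t → αn n t ≤ βn n t)
    (hconv : Tendsto (fun n =>
      (⨆ t : Ici (0:ℝ), ENNReal.ofReal |un n t.1 - u t.1|) +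
      (⨆ t : Ici (0:ℝ), ENNReal.ofReal |αn n t.1 - α t.1|) +
      (⨆ t : Ici (0:ℝ), ENNReal.ofReal |βn n t.1 - β t.1|)) atTop (𝓝 0)) :
    ∀ T : ℝ, 0 < T →
      TendstoUniformlyOn
        (fun n t => (TVab (un n) (αn n) (βn n) 0 t).toReal)
        (fun t => (TVab u α β 0 t).toReal) atTop (Icc 0 T) ∧
      TendstoUniformlyOn
        (fun n t => (UTVab (un n) (αn n) (βn n) 0 t).toReal)
        (fun t => (UTVab u α β 0 t).toReal) atTop (Icc 0 T) ∧
      TendstoUniformlyOn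
        (fun n t => (DTVab (un n) (αn n) (βn n) 0 t).toReal)
        (fun t => (DTVab u α β 0 t).toReal) atTop (Icc 0 T) := by
  intro T hT
  set ψt : ℝ → ℝ := fun x => u x - (α x + β x)/2 with hψt
  set γf : ℝ → ℝ := fun x => β x - α x with hγf
  set ψtn : ℕ → ℝ → ℝ := fun n x => un n x - (αn n x + βn n x)/2 with hψtn
  set γfn : ℕ → ℝ → ℝ := fun n x => βn n x - αn n x with hγfn
  have hψreg : Regulated 0 ψt := by
    constructor
    · intro x hx
      obtain ⟨Lu, hLu⟩ := hu.1 x hx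
      obtain ⟨La, hLa⟩ := hα.1 x hx
      obtain ⟨Lb, hLb⟩ := hβ.1 x hx
      exact ⟨Lu - (La + Lb)/2, hLu.sub (((hLa.add hLb)).div_const 2)⟩
    · intro x hx
      obtain ⟨Lu, hLu⟩ := hu.2 x hx
      obtain ⟨La, hLa⟩ := hα.2 x hx
      obtain ⟨Lb, hLb⟩ := hβ.2 x hx
      exact ⟨Lu - (La + Lb)/2, hLu.sub (((hLa.add hLb)).div_const 2)⟩
  have hconv' : ∀ ε : ℝ, 0 < ε → ∃ n₀ : ℕ, ∀ n ≥ n₀, ∀ x, 0 ≤ x →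
      |ψtn n x - ψt x| ≤ ε ∧ |γfn n x - γf x| ≤ ε := by
    intro ε hε
    rw [ENNReal.tendsto_atTop_zero] at hconv
    obtain ⟨n₀, hn₀⟩ := hconv (ENNReal.ofReal (ε/2)) (ENNReal.ofReal_pos.mpr (by positivity))
    refine ⟨n₀, fun n hn x hx => ?_⟩
    have hsum := hn₀ n hn
    have hA : (⨆ t : Ici (0:ℝ), ENNReal.ofReal |un n t.1 - u t.1|) ≤ ENNReal.ofReal (ε/2) :=
      le_trans (le_trans le_self_add le_self_add) hsum
    have hB : (⨆ t : Ici (0:ℝ), ENNReal.ofReal |αn n t.1 - α t.1|) ≤ ENNReal.ofReal (ε/2) :=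
      le_trans (le_trans le_add_self le_self_add) hsum
    have hC : (⨆ t : Ici (0:ℝ), ENNReal.ofReal |βn n t.1 - β t.1|) ≤ ENNReal.ofReal (ε/2) :=
      le_trans le_add_self hsum
    have hu' : |un n x - u x| ≤ ε/2 :=
      (ENNReal.ofReal_le_ofReal_iff (by positivity)).mp
        (le_trans (le_iSup (fun t : Ici (0:ℝ) => ENNReal.ofReal |un n t.1 - u t.1|) ⟨x, hx⟩) hA)
    have hα' : |αn n x - α x| ≤ ε/2 :=
      (ENNReal.ofReal_le_ofReal_iff (by positivity)).mp
        (le_trans (le_iSup (fun t : Ici (0:ℝ) => ENNReal.ofReal |αn n t.1 - α t.1|) ⟨x, hx⟩) hB)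
    have hβ' : |βn n x - β x| ≤ ε/2 :=
      (ENNReal.ofReal_le_ofReal_iff (by positivity)).mp
        (le_trans (le_iSup (fun t : Ici (0:ℝ) => ENNReal.ofReal |βn n t.1 - β t.1|) ⟨x, hx⟩) hC)
    constructor
    · have e : ψtn n x - ψt x = (un n x - u x) - ((αn n x - α x) + (βn n x - β x))/2 := by
        simp only [hψtn, hψt]; ring
      rw [e]
      have h1 := abs_sub (un n x - u x) (((αn n x - α x) + (βn n x - β x))/2)
      have h2 := abs_add_le (αn n x - α x) (βn n x - β x)
      rw [abs_div, abs_two] at h1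
      linarith
    · have e : γfn n x - γf x = (βn n x - β x) - (αn n x - α x) := by
        simp only [hγfn, hγf]; ring
      rw [e]
      have h1 := abs_sub (βn n x - β x) (αn n x - α x)
      linarith
  refine ⟨?_, ?_, ?_⟩
  · exact key (fun x => |x|) (fun x y => abs_abs_sub_abs_le_abs_sub x y)
      (fun x => le_of_eq (abs_abs x)) ψt γf hψreg γ₀ hγ₀ hgap ψtn γfn hconv' T hT
  · exact key (fun x => x) (fun x y => le_rfl) (fun x => le_rfl)
      ψt γf hψreg γ₀ hγ₀ hgap ψtn γfn hconv' T hT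
  · have h3 := key (fun x => -x)
      (fun x y => by rw [← abs_neg]; apply le_of_eq; congr 1; ring)
      (fun x => le_of_eq (abs_neg x))
      ψt γf hψreg γ₀ hγ₀ hgap ψtn γfn hconv' T hT
    have e1 : (fun n t' => (genVar (fun s t => max ((fun x : ℝ => -x) (ψtn n t - ψtn n s) - (γfn n t + γfn n s)/2) 0) 0 t').toReal)
        = (fun n t => (DTVab (un n) (αn n) (βn n) 0 t).toReal) := by
      funext n t'
      congr 2
      funext s t
      congr 1
      simp only [hψtn, hγfn]
      ring
    have e2 : (fun t' => (genVar (fun s t => max ((fun x : ℝ => -x) (ψt t - ψt s) - (γf t + γf s)/2) 0) 0 t').toReal)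
        = (fun t => (DTVab u α β 0 t).toReal) := by
      funext t'
      congr 2
      funext s t
      congr 1
      simp only [hψt, hγf]
      ring
    rw [e1, e2] at h3
    exact h3
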